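/- The number of 7-tuples (σ₁,...,σ₇) of elements of the symmetric group S₃ such that σ₁ is a 3-cycle, σ₂,...,σ₇ are transpositions, and σ₁σ₂⋯σ₇ = 1, equals 3⁵·2 = 486. -/

import Mathlib

instance : DecidablePred (Equiv.Perm.IsThreeCycle (α := Fin 3)) :=
  fun σ => decidable_of_iff (σ.cycleType = {3}) Iff.rfl

instance : DecidablePred (Equiv.Perm.IsSwap (α := Fin 3)) :=
  fun σ => decidable_of_iff (∃ x y, x ≠ y ∧ σ = Equiv.swap x y) Iff.rfl

private lemma isSwap_of_sign (g : Equiv.Perm (Fin 3)) (h : Equiv.Perm.sign g = -1) :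
    g.IsSwap := by revert h; revert g; decide

private lemma sign_of_isSwap {g : Equiv.Perm (Fin 3)} (h : g.IsSwap) :
    Equiv.Perm.sign g = -1 := by
  obtain ⟨x, y, hxy, rfl⟩ := h
  exact Equiv.Perm.sign_swap hxy

private def Fmap (p : {g : Equiv.Perm (Fin 3) // g.IsThreeCycle} ×
    (Fin 5 → {g : Equiv.Perm (Fin 3) // g.IsSwap})) :
    {σ : Fin 7 → Equiv.Perm (Fin 3) //
      (σ 0).IsThreeCycle ∧ (∀ i : Fin 7, i ≠ 0 → (σ i).IsSwap) ∧
      (List.ofFn σ).prod = 1} := by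
  obtain ⟨c, f⟩ := p
  refine ⟨![c.1, (f 0).1, (f 1).1, (f 2).1, (f 3).1, (f 4).1,
    (c.1 * (f 0).1 * (f 1).1 * (f 2).1 * (f 3).1 * (f 4).1)⁻¹], c.2, ?_, ?_⟩
  · intro i hi
    fin_cases i
    · exact absurd rfl hi
    · exact (f 0).2
    · exact (f 1).2
    · exact (f 2).2
    · exact (f 3).2
    · exact (f 4).2
    · refine isSwap_of_sign _ ?_
      show Equiv.Perm.sign (c.1 * (f 0).1 * (f 1).1 * (f 2).1 * (f 3).1 * (f 4).1)⁻¹ = -1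
      simp [c.2.sign, sign_of_isSwap (f 0).2, sign_of_isSwap (f 1).2,
        sign_of_isSwap (f 2).2, sign_of_isSwap (f 3).2, sign_of_isSwap (f 4).2]
  · simp [List.ofFn_succ, mul_assoc]

private lemma Fmap_bijective : Function.Bijective Fmap := by
  constructor
  · rintro ⟨c, f⟩ ⟨c', f'⟩ h
    have h' := congrArg Subtype.val h
    refine Prod.ext (Subtype.ext ?_) (funext fun i => Subtype.ext ?_)
    · exact congrFun h' 0
    · fin_cases i
      · exact congrFun h' 1
      · exact congrFun h' 2
      · exact congrFun h' 3
      · exact congrFun h' 4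
      · exact congrFun h' 5
  · rintro ⟨σ, h1, h2, h3⟩
    refine ⟨⟨⟨σ 0, h1⟩, fun i => ⟨σ ⟨i.1 + 1, by omega⟩, h2 _ (by intro h; exact absurd (congrArg Fin.val h) (Nat.succ_ne_zero _))⟩⟩,
      Subtype.ext (funext fun j => ?_)⟩
    have h3' : σ 0 * (σ 1 * (σ 2 * (σ 3 * (σ 4 * (σ 5 * σ 6))))) = 1 := by
      simpa [List.ofFn_succ, mul_assoc] using h3
    fin_cases j
    · rfl
    · rfl
    · rfl
    · rfl
    · rfl
    · rfl
    · show (σ 0 * σ 1 * σ 2 * σ 3 * σ 4 * σ 5)⁻¹ = σ 6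
      refine inv_eq_of_mul_eq_one_right ?_
      simpa [mul_assoc] using h3'

/-- The number of 7-tuples (σ₁,...,σ₇) of elements of S₃ such that σ₁ is a
3-cycle, σ₂,...,σ₇ are transpositions, and σ₁σ₂⋯σ₇ = 1, equals 3⁵·2 = 486. -/
theorem count_tuples_S3 :
    Nat.card {σ : Fin 7 → Equiv.Perm (Fin 3) //
      (σ 0).IsThreeCycle ∧ (∀ i : Fin 7, i ≠ 0 → (σ i).IsSwap) ∧
      (List.ofFn σ).prod = 1} = 486 := by
  rw [← Nat.card_eq_of_bijective Fmap Fmap_bijective]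
  rw [Nat.card_eq_fintype_card, Fintype.card_prod, Fintype.card_fun]
  have h1 : Fintype.card {g : Equiv.Perm (Fin 3) // g.IsThreeCycle} = 2 := by decide
  have h2 : Fintype.card {g : Equiv.Perm (Fin 3) // g.IsSwap} = 3 := by decide
  rw [h1, h2]
  norm_num
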